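/- arXiv:1705.01805 — 2 statements merged into one kernel-verified Lean document; each statement's English description precedes it below -/
import Mathlib

section
/- For every positive integer k and every real x > 0, the counting function of B_k satisfies #B_k(x) = ∑_{d ≤ x, gcd(d,k) = 1} μ(d) · ⌊x / ℓ(dk)⌋, where the sum runs over positive integers d ≤ x coprime to k. -/
open scoped BigOperators

/-- `fibZ m` is the rank of appearance of `m`: the least positive `n` with `m ∣ F_n`. -/
noncomputable def fibZ (m : ℕ) : ℕ := sInf {n : ℕ | 0 < n ∧ m ∣ Nat.fib n}

/-- `fibL m = lcm(m, z(m))`. -/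
noncomputable def fibL (m : ℕ) : ℕ := Nat.lcm m (fibZ m)

/-- `countIn S x` is the number of elements of `S` in `[1, x]`. -/
noncomputable def countIn (S : Set ℕ) (x : ℝ) : ℕ :=
  (S ∩ {n : ℕ | 1 ≤ n ∧ (n : ℝ) ≤ x}).ncard

/-- `S` has asymptotic density `a`. -/
def HasDensity (S : Set ℕ) (a : ℝ) : Prop :=
  Filter.Tendsto (fun x : ℝ => (countIn S x : ℝ) / x) Filter.atTop (nhds a)

/-- `fibA k` is the set of positive integers `n` with `gcd(n, F_n) = k`. -/
def fibA (k : ℕ) : Set ℕ := {n : ℕ | 0 < n ∧ Nat.gcd n (Nat.fib n) = k}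
/-- `fibB k` is the set of positive `n` such that `k ∣ gcd(n, F_n)` and every prime
dividing `gcd(n, F_n)` divides `k`. -/
def fibB (k : ℕ) : Set ℕ :=
  {n : ℕ | 0 < n ∧ k ∣ Nat.gcd n (Nat.fib n) ∧
    ∀ p : ℕ, p.Prime → p ∣ Nat.gcd n (Nat.fib n) → p ∣ k}

/-!
Write `g = gcd(n, F_n)`. Since `ℓ(m) ∣ n ↔ m ∣ g`, the sum `∑_{d coprime to k, ℓ(dk) ∣ n} μ(d)`
vanishes unless `k ∣ g`, and is then `∑_{d ∣ g, (d, k) = 1} μ(d)`, which is `1` exactly when every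
prime factor of `g` divides `k`, i.e. it is the indicator of `B_k`. Summing over `n ≤ x` and
exchanging the sums, each `d` contributes `μ(d)` times the number `⌊x / ℓ(dk)⌋` of multiples
of `ℓ(dk)` up to `x`.
-/

open Finset ArithmeticFunction
open scoped ArithmeticFunction.Moebius

namespace Nat.IsStrongDvdSequence

theorem dvd_iff_sInf_dvd {f : ℕ → ℕ} (hf : IsStrongDvdSequence f) {m : ℕ}
    (h : ∃ n, 0 < n ∧ m ∣ f n) (n : ℕ) :
    m ∣ f n ↔ sInf {n | 0 < n ∧ m ∣ f n} ∣ n := by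
  set z := sInf {n | 0 < n ∧ m ∣ f n}
  obtain ⟨hz, hmz⟩ : 0 < z ∧ m ∣ f z := Nat.sInf_mem h
  refine ⟨fun hmn => ?_, fun hzn => hmz.trans (hf.isDvdSequence _ _ hzn)⟩
  have hgcd_pos : 0 < z.gcd n := Nat.gcd_pos_of_pos_left _ hz
  have hm_gcd : m ∣ f (z.gcd n) := hf z n ▸ Nat.dvd_gcd hmz hmn
  have hgcd : z.gcd n = z :=
    le_antisymm (Nat.le_of_dvd hz (Nat.gcd_dvd_left _ _)) (Nat.sInf_le ⟨hgcd_pos, hm_gcd⟩)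
  exact hgcd ▸ Nat.gcd_dvd_right z n

end Nat.IsStrongDvdSequence

def fibShift (R : Type*) [AddCommGroup R] : Equiv.Perm (R × R) where
  toFun p := (p.2, p.1 + p.2)
  invFun p := (p.2 - p.1, p.1)
  left_inv p := by simp
  right_inv p := by simp

lemma fibShift_pow_apply_zero_one (R : Type*) [CommRing R] (n : ℕ) :
    (fibShift R ^ n) (0, 1) = ((Nat.fib n : R), (Nat.fib (n + 1) : R)) := by
  induction n with
  | zero => simp
  | succ n ih =>
    rw [pow_succ', Equiv.Perm.mul_apply, ih]
    simp [fibShift, Nat.fib_add_two]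

/-- If `t` is the order of `fibShift` on `(ZMod m)²`, then `(F_t, F_{t+1}) ≡ (0, 1) mod m`. -/
lemma exists_pos_dvd_fib {m : ℕ} (hm : 0 < m) : ∃ n, 0 < n ∧ m ∣ Nat.fib n := by
  have : NeZero m := ⟨hm.ne'⟩
  set t := orderOf (fibShift (ZMod m))
  refine ⟨t, orderOf_pos _, ?_⟩
  have h := congrArg Prod.fst (fibShift_pow_apply_zero_one (ZMod m) t)
  rw [pow_orderOf_eq_one] at h
  exact (ZMod.natCast_eq_zero_iff _ _).mp h.symm

lemma dvd_fib_iff_fibZ_dvd {m : ℕ} (hm : 0 < m) (n : ℕ) : m ∣ Nat.fib n ↔ fibZ m ∣ n :=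
  Nat.isStrongDvdSequence_fib.dvd_iff_sInf_dvd (exists_pos_dvd_fib hm) n

lemma fibL_dvd_iff {m : ℕ} (hm : 0 < m) (n : ℕ) : fibL m ∣ n ↔ m ∣ n.gcd (Nat.fib n) := by
  rw [fibL, Nat.lcm_dvd_iff, ← dvd_fib_iff_fibZ_dvd hm, Nat.dvd_gcd_iff]

lemma mem_fibB_iff {k n : ℕ} (hn : 0 < n) :
    n ∈ fibB k ↔ k ∣ n.gcd (Nat.fib n) ∧ ∀ p ∈ (n.gcd (Nat.fib n)).primeFactors, p ∣ k := by
  have hg : n.gcd (Nat.fib n) ≠ 0 := (Nat.gcd_pos_of_pos_left _ hn).ne'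
  simp only [fibB, Set.mem_ofPred_eq, Nat.mem_primeFactors, ne_eq, hg, not_false_eq_true,
    and_true, true_and, hn]
  exact and_congr_right fun _ => ⟨fun h p hp => h p hp.1 hp.2, fun h p hp hpg => h p ⟨hp, hpg⟩⟩

lemma sum_moebius_divisors_coprime {n : ℕ} (hn : n ≠ 0) (k : ℕ) :
    ∑ d ∈ n.divisors with d.Coprime k, (μ d : ℤ) =
      if ∀ p ∈ n.primeFactors, p ∣ k then 1 else 0 := by
  set S := {p ∈ n.primeFactors | ¬ p ∣ k}
  have hsub : ∀ t ⊆ n.primeFactors, (∏ p ∈ t, p).Coprime k ↔ t ⊆ S := by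
    intro t ht
    simp only [Nat.coprime_prod_left_iff, subset_iff, S, mem_filter]
    refine forall₂_congr fun p hp => ?_
    rw [(Nat.prime_of_mem_primeFactors (ht hp)).coprime_iff_not_dvd]
    exact ⟨fun h => ⟨ht hp, h⟩, And.right⟩
  -- Only squarefree `d = ∏ p ∈ t, p` contribute, with `μ d = (-1) ^ #t`.
  calc ∑ d ∈ n.divisors with d.Coprime k, (μ d : ℤ)
      = ∑ d ∈ n.divisors with Squarefree d, if d.Coprime k then (μ d : ℤ) else 0 := by
        rw [sum_filter, sum_filter]
        refine sum_congr rfl fun d _ => ?_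
        by_cases hd : Squarefree d <;> simp [hd]
    _ = ∑ t ∈ n.primeFactors.powerset, if (∏ p ∈ t, p).Coprime k then (-1) ^ #t else 0 := by
        rw [Nat.sum_divisors_filter_squarefree hn, Nat.factors_eq]
        refine sum_congr rfl fun t ht => ?_
        have htn : t ⊆ n.primeFactors := mem_powerset.mp ht
        rw [Finset.prod_val, Function.id_def,
          isMultiplicative_moebius.map_prod_of_subset_primeFactors n t htn,
          prod_congr rfl fun p hp => moebius_apply_prime (Nat.prime_of_mem_primeFactors (htn hp)),
          prod_const]
    _ = ∑ t ∈ S.powerset, (-1) ^ #t := by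
        rw [← sum_filter]
        refine sum_congr (ext fun t => ⟨fun h => ?_, fun h => ?_⟩) fun _ _ => rfl
        · obtain ⟨ht, hcop⟩ := mem_filter.mp h
          exact mem_powerset.mpr ((hsub t (mem_powerset.mp ht)).mp hcop)
        · have ht : t ⊆ n.primeFactors := (mem_powerset.mp h).trans (filter_subset _ _)
          exact mem_filter.mpr ⟨mem_powerset.mpr ht, (hsub t ht).mpr (mem_powerset.mp h)⟩
    _ = if ∀ p ∈ n.primeFactors, p ∣ k then 1 else 0 := by
        rw [sum_powerset_neg_one_pow_card]
        exact if_congr (by simp only [S, filter_eq_empty_iff, not_not]) rfl rfl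

lemma sum_moebius_coprime_mul_dvd {g : ℕ} (hg : g ≠ 0) (k : ℕ) :
    ∑ d ∈ g.divisors with d.Coprime k ∧ d * k ∣ g, (μ d : ℤ) =
      if k ∣ g ∧ ∀ p ∈ g.primeFactors, p ∣ k then 1 else 0 := by
  by_cases hkg : k ∣ g
  · have hfilter :
        {d ∈ g.divisors | d.Coprime k ∧ d * k ∣ g} = {d ∈ g.divisors | d.Coprime k} :=
      filter_congr fun d hd => and_iff_left_of_imp fun hdk =>
        hdk.mul_dvd_of_dvd_of_dvd (Nat.dvd_of_mem_divisors hd) hkg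
    rw [hfilter, sum_moebius_divisors_coprime hg]
    exact if_congr (and_iff_right hkg).symm rfl rfl
  · rw [if_neg (fun h => hkg h.1)]
    exact sum_eq_zero fun d hd => absurd (dvd_of_mul_left_dvd (mem_filter.mp hd).2.2) hkg

open Classical in
lemma sum_moebius_fibL_dvd {k n N : ℕ} (hk : 0 < k) (hn : n ∈ Icc 1 N) :
    ∑ d ∈ Icc 1 N with d.Coprime k, (if fibL (d * k) ∣ n then (μ d : ℤ) else 0) =
      if n ∈ fibB k then 1 else 0 := by
  obtain ⟨hn1, hnN⟩ := mem_Icc.mp hn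
  have hg : n.gcd (Nat.fib n) ≠ 0 := (Nat.gcd_pos_of_pos_left _ hn1).ne'
  rw [← sum_filter, filter_filter]
  refine .trans ?_ ((sum_moebius_coprime_mul_dvd hg k).trans
    (if_congr (mem_fibB_iff hn1).symm rfl rfl))
  refine sum_congr (ext fun d => ?_) fun _ _ => rfl
  simp only [mem_filter, mem_Icc, Nat.mem_divisors]
  constructor
  · rintro ⟨⟨hd1, -⟩, hdk, hL⟩
    have hdkg := (fibL_dvd_iff (Nat.mul_pos hd1 hk) n).mp hL
    exact ⟨⟨dvd_of_mul_right_dvd hdkg, hg⟩, hdk, hdkg⟩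
  · rintro ⟨⟨hdg, -⟩, hdk, hdkg⟩
    have hd1 : 0 < d := Nat.pos_of_dvd_of_pos hdg (Nat.pos_of_ne_zero hg)
    have hdn : d ≤ n := Nat.le_of_dvd hn1 (hdg.trans (Nat.gcd_dvd_left _ _))
    exact ⟨⟨hd1, hdn.trans hnN⟩, hdk, (fibL_dvd_iff (Nat.mul_pos hd1 hk) n).mpr hdkg⟩

lemma countIn_eq_card_filter (S : Set ℕ) [DecidablePred (· ∈ S)] (x : ℝ) :
    countIn S x = #{n ∈ Icc 1 ⌊x⌋₊ | n ∈ S} := by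
  rw [countIn, ← Set.ncard_coe_finset]
  congr 1
  ext n
  simp only [Set.mem_inter_iff, Set.mem_ofPred_eq, coe_filter, mem_Icc]
  constructor
  · rintro ⟨hS, hn1, hnx⟩
    exact ⟨⟨hn1, (Nat.le_floor_iff' (by omega)).mpr hnx⟩, hS⟩
  · rintro ⟨⟨hn1, hnx⟩, hS⟩
    exact ⟨hS, hn1, (Nat.le_floor_iff' (by omega)).mp hnx⟩

lemma card_filter_dvd_Icc_floor {x : ℝ} (hx : 0 ≤ x) (L : ℕ) :
    (#{n ∈ Icc 1 ⌊x⌋₊ | L ∣ n} : ℤ) = ⌊x / L⌋ := by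
  rw [← Int.natCast_floor_eq_floor (div_nonneg hx L.cast_nonneg), Nat.floor_div_natCast,
    ← Nat.Ioc_filter_dvd_card_eq_div]
  rfl

theorem count_fibB_eq_sum (k : ℕ) (hk : 0 < k) (x : ℝ) (hx : 0 < x) :
    (countIn (fibB k) x : ℤ) =
      ∑ d ∈ (Finset.Icc 1 ⌊x⌋₊).filter (fun d => Nat.Coprime d k),
        ArithmeticFunction.moebius d * ⌊x / (fibL (d * k) : ℝ)⌋ := by
  classical
  set N := ⌊x⌋₊
  calc (countIn (fibB k) x : ℤ) = ∑ n ∈ Icc 1 N, if n ∈ fibB k then 1 else 0 := by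
        rw [countIn_eq_card_filter, natCast_card_filter]
    _ = ∑ n ∈ Icc 1 N, ∑ d ∈ Icc 1 N with d.Coprime k,
          if fibL (d * k) ∣ n then (μ d : ℤ) else 0 :=
        sum_congr rfl fun n hn => (sum_moebius_fibL_dvd hk hn).symm
    _ = ∑ d ∈ Icc 1 N with d.Coprime k, ∑ n ∈ Icc 1 N,
          if fibL (d * k) ∣ n then (μ d : ℤ) else 0 := sum_comm
    _ = _ := sum_congr rfl fun d _ => by
        rw [← sum_filter, sum_const, nsmul_eq_mul, card_filter_dvd_Icc_floor hx.le, mul_comm]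
end

section
/- For all positive integers m and n, ℓ(lcm(m, n)) = lcm(ℓ(m), ℓ(n)), where ℓ(m) = lcm(m, z(m)). -/
open scoped BigOperators

lemma fib_back (m a b : ℕ) (h1 : (Nat.fib (a+1) : ZMod m) = Nat.fib (b+1))
    (h2 : (Nat.fib (a+2) : ZMod m) = Nat.fib (b+2)) :
    (Nat.fib a : ZMod m) = Nat.fib b := by
  have ha : (Nat.fib (a+2) : ZMod m) = Nat.fib (a+1) + Nat.fib a := by
    rw [Nat.fib_add_two]; push_cast; ring
  have hb : (Nat.fib (b+2) : ZMod m) = Nat.fib (b+1) + Nat.fib b := by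
    rw [Nat.fib_add_two]; push_cast; ring
  have := h2; rw [ha, hb, h1] at this
  exact add_left_cancel this

lemma fib_exists_dvd (m : ℕ) (hm : 0 < m) : ∃ n, 0 < n ∧ m ∣ Nat.fib n := by
  haveI : NeZero m := ⟨hm.ne'⟩
  obtain ⟨i, j, hne, hf⟩ := Finite.exists_ne_map_eq_of_infinite
    (fun k : ℕ => ((Nat.fib k : ZMod m), (Nat.fib (k+1) : ZMod m)))
  wlog hij : i < j generalizing i j
  · exact this j i hne.symm hf.symm (by omega)
  have key : ∀ d, d ≤ i →
      (Nat.fib (i-d) : ZMod m) = Nat.fib (j-d) ∧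
      (Nat.fib (i-d+1) : ZMod m) = Nat.fib (j-d+1) := by
    intro d
    induction d with
    | zero => intro _; simpa using Prod.mk.injEq .. ▸ hf
    | succ d ih =>
      intro hd
      obtain ⟨h1, h2⟩ := ih (by omega)
      have e1 : i - d = (i - (d+1)) + 1 := by omega
      have e2 : j - d = (j - (d+1)) + 1 := by omega
      rw [e1, e2] at h1 h2
      exact ⟨fib_back m _ _ h1 h2, h1⟩
  have h0 := (key i le_rfl).1
  simp only [Nat.sub_self, Nat.fib_zero, Nat.cast_zero] at h0
  refine ⟨j - i, by omega, ?_⟩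
  exact (ZMod.natCast_eq_zero_iff _ m).mp h0.symm

lemma fibZ_mem (m : ℕ) (hm : 0 < m) : 0 < fibZ m ∧ m ∣ Nat.fib (fibZ m) :=
  Nat.sInf_mem (fib_exists_dvd m hm)

lemma dvd_fib_iff (m n : ℕ) (hm : 0 < m) : m ∣ Nat.fib n ↔ fibZ m ∣ n := by
  obtain ⟨hz, hdvd⟩ := fibZ_mem m hm
  constructor
  · intro h
    have hg : m ∣ Nat.fib (Nat.gcd n (fibZ m)) := by
      rw [Nat.fib_gcd]; exact Nat.dvd_gcd h hdvd
    have hgpos : 0 < Nat.gcd n (fibZ m) := Nat.pos_of_ne_zero (by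
      intro h0; rw [Nat.gcd_eq_zero_iff] at h0; omega)
    have hle : fibZ m ≤ Nat.gcd n (fibZ m) := Nat.sInf_le ⟨hgpos, hg⟩
    have heq : Nat.gcd n (fibZ m) = fibZ m :=
      Nat.le_antisymm (Nat.le_of_dvd hz (Nat.gcd_dvd_right _ _)) hle
    exact heq ▸ Nat.gcd_dvd_left n (fibZ m)
  · intro h
    exact dvd_trans hdvd (Nat.fib_dvd _ _ h)

lemma fibZ_lcm (m n : ℕ) (hm : 0 < m) (hn : 0 < n) :
    fibZ (Nat.lcm m n) = Nat.lcm (fibZ m) (fibZ n) := by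
  have hl : 0 < Nat.lcm m n := Nat.lcm_pos hm hn
  have key : ∀ k, Nat.lcm m n ∣ Nat.fib k ↔ Nat.lcm (fibZ m) (fibZ n) ∣ k := by
    intro k
    rw [Nat.lcm_dvd_iff, Nat.lcm_dvd_iff, dvd_fib_iff m k hm, dvd_fib_iff n k hn]
  apply Nat.dvd_antisymm
  · exact (dvd_fib_iff _ _ hl).mp ((key _).mpr dvd_rfl)
  · exact (key _).mp (fibZ_mem _ hl).2

theorem fibL_lcm (m n : ℕ) (hm : 0 < m) (hn : 0 < n) :
    fibL (Nat.lcm m n) = Nat.lcm (fibL m) (fibL n) := by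
  unfold fibL
  rw [fibZ_lcm m n hm hn]
  apply Nat.dvd_antisymm <;>
  · apply Nat.lcm_dvd <;> apply Nat.lcm_dvd <;>
    first
      | exact Nat.dvd_lcm_left _ _ |>.trans (Nat.dvd_lcm_left _ _)
      | exact Nat.dvd_lcm_left _ _ |>.trans (Nat.dvd_lcm_right _ _)
      | exact Nat.dvd_lcm_right _ _ |>.trans (Nat.dvd_lcm_left _ _)
      | exact Nat.dvd_lcm_right _ _ |>.trans (Nat.dvd_lcm_right _ _)
end
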